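/- arXiv:2509.20545 — 3 statements merged into one kernel-verified Lean document; each statement's English description precedes it below -/
import Mathlib

section
/- Let q ≥ 2 and N ≥ 2 be integers and let n ∈ S_{q,N}. Then for any deletion types j₁, j₂ ∈ {0,…,q−1}, any positions i₁, i₁′ ∈ {1,…,N}, and any positions i₂, i₂′ ∈ {1,…,N−1}, one has K_{j₁,i₂}(K_{j₂,i₁} D_n) = K_{j₂,i₂′}(K_{j₁,i₁′} D_n); i.e., the composite action of two deletions on a Dicke state depends neither on the order of the deletion types nor on the positions at which they are applied. -/
/-- The discrete simplex `S_{q,N}`: tuples of naturals of length `q` summing to `N`. -/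
def simplex (q N : ℕ) : Finset (Fin q → ℕ) := Finset.Nat.antidiagonalTuple q N

/-- Multinomial coefficient `C(∑ n; n)` for a tuple of naturals. -/
def multinat {q : ℕ} (n : Fin q → ℕ) : ℕ := Nat.multinomial Finset.univ n

/-- Multinomial coefficient for an integer tuple: `0` if some entry is negative. -/
def multZ {q : ℕ} (n : Fin q → ℤ) : ℕ :=
  if ∀ i, 0 ≤ n i then Nat.multinomial Finset.univ (fun i => (n i).toNat) else 0

/-- The `N`-qudit space `H_{q,N}`: complex-valued functions on strings `Fin N → Fin q`. -/
abbrev Hsp (q N : ℕ) := (Fin N → Fin q) → ℂ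

/-- The inner product `⟨u,v⟩ = ∑_x conj (u x) · v x` on `H_{q,N}`. -/
noncomputable def hinner {q N : ℕ} (u v : Hsp q N) : ℂ :=
  ∑ x : Fin N → Fin q, (starRingEnd ℂ) (u x) * v x

/-- The composition of a string `x : Fin N → Fin q`: `compn x i = #{k : x k = i}`. -/
def compn {q N : ℕ} (x : Fin N → Fin q) : Fin q → ℕ :=
  fun i => (Finset.univ.filter (fun k => x k = i)).card

/-- The Dicke state `D_n = C(N;n)^{-1/2} ∑_{x : comp x = n} δ_x`. -/
noncomputable def dicke {q N : ℕ} (n : Fin q → ℕ) : Hsp q N :=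
  fun x => if compn x = n then (((Real.sqrt (multinat n))⁻¹ : ℝ) : ℂ) else 0

/-- The type-`j` deletion operator at position `i`: `(delAt j i v) y = v (y with j inserted
at position i)`; equivalently `delAt j i δ_x = [x i = j] · δ_{x∼i}`. -/
def delAt {q M : ℕ} (j : Fin q) (i : Fin (M + 1)) (v : Hsp q (M + 1)) : Hsp q M :=
  fun y => v (i.insertNth j y)

lemma compn_insertNth {q M : ℕ} (j : Fin q) (i : Fin (M + 1)) (y : Fin M → Fin q) :
    compn (i.insertNth j y) = Pi.single j 1 + compn y := by
  funext k
  simp only [compn, Finset.card_filter, Fin.sum_univ_succAbove _ i, Fin.insertNth_apply_same,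
    Fin.insertNth_apply_succAbove, Pi.add_apply, Pi.single_apply, eq_comm]

theorem deletions_commute_on_dicke_general (q M : ℕ) (n : Fin q → ℕ)
    (j₁ j₂ : Fin q)
    (i₁ i₁' : Fin (M + 2)) (i₂ i₂' : Fin (M + 1)) :
    delAt j₁ i₂ (delAt j₂ i₁ (dicke n)) = delAt j₂ i₂' (delAt j₁ i₁' (dicke n)) := by
  funext y
  -- both sides evaluate `dicke n` at strings of composition `single j₁ 1 + single j₂ 1 + compn y`
  simp only [delAt, dicke, compn_insertNth, add_left_comm (Pi.single j₁ 1)]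

/-- the composite action of two single deletions on a Dicke state depends
neither on the order of the deletion types nor on the positions at which they are applied.
(Here `N = M + 2 ≥ 2` and `q ≥ 2`.) -/
theorem deletions_commute_on_dicke (q M : ℕ) (hq : 2 ≤ q) (n : Fin q → ℕ)
    (hn : ∑ i, n i = M + 2) (j₁ j₂ : Fin q)
    (i₁ i₁' : Fin (M + 2)) (i₂ i₂' : Fin (M + 1)) :
    delAt j₁ i₂ (delAt j₂ i₁ (dicke n)) = delAt j₂ i₂' (delAt j₁ i₁' (dicke n)) :=
  deletions_commute_on_dicke_general q M n j₁ j₂ i₁ i₁' i₂ i₂'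
end

section
/- Let q ≥ 2, K ≥ 2, and N ≥ t ≥ 0 be integers. Let α^{(0)},…,α^{(K−1)} ∈ ℂ^{S_{q,N}} be nonzero vectors satisfying conditions (C1) and (C2), and set c_i = ∑_{n∈S_{q,N}} α^{(i)}_n D_n in H_{q,N}. Then the following are equivalent: (a) for all e, f ∈ S_{q,t}, ⟨E_e c_i, E_f c_j⟩ = 0 for all i ≠ j and ⟨E_e c_i, E_f c_i⟩ = ⟨E_e c_j, E_f c_j⟩ for all i, j (the Knill–Laflamme orthogonality and non-deformation conditions for the t-deletion Kraus set); (b) conditions (C3) and (C4) hold. In other words, the permutation-invariant code with basis (c_i) has distance t+1 if and only if (C1)–(C4) hold. -/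
/-- The composite deletion operator determined by a word `w : Fin t → Fin q` of deletion
types: the composition of `t` single deletions of types `w 0, w 1, …`, each applied at
position `1`.  For `e ∈ S_{q,t}`, the operator `E_e` is `Edel w` for any word `w` with
composition `e`; every `e ∈ S_{q,t}` arises as the composition of some word. -/
def Edel {q : ℕ} : {t : ℕ} → (Fin t → Fin q) → {M : ℕ} → Hsp q (M + t) → Hsp q M
  | 0, _, _, v => v
  | _ + 1, w, _, v => Edel (fun k => w k.succ) (delAt (w 0) 0 v)

/-- The coefficient `C(N−t; n−e) / √(C(N;n)·C(N; n−e+f))` appearing in the error-correction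
conditions; it vanishes when `n − e` has a negative entry. -/
noncomputable def klCoeff {q : ℕ} (n e f : Fin q → ℕ) : ℝ :=
  (multZ (fun i => (n i : ℤ) - (e i : ℤ)) : ℝ) /
    Real.sqrt ((multinat n : ℝ) * (multinat (fun i => n i - e i + f i) : ℝ))

/-- Condition (C1): the rows of `α` are pairwise orthogonal. -/
def condC1 (q K N : ℕ) (α : Fin K → (Fin q → ℕ) → ℂ) : Prop :=
  ∀ i j : Fin K, i ≠ j → ∑ n ∈ simplex q N, (starRingEnd ℂ) (α i n) * α j n = 0

/-- Condition (C2): the rows of `α` have equal norms. -/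
def condC2 (q K N : ℕ) (α : Fin K → (Fin q → ℕ) → ℂ) : Prop :=
  ∀ i j : Fin K,
    ∑ n ∈ simplex q N, Complex.normSq (α i n) = ∑ n ∈ simplex q N, Complex.normSq (α j n)

/-- Condition (C3): Knill–Laflamme orthogonality condition. -/
def condC3 (q K N t : ℕ) (α : Fin K → (Fin q → ℕ) → ℂ) : Prop :=
  ∀ i j : Fin K, i ≠ j → ∀ e ∈ simplex q t, ∀ f ∈ simplex q t,
    ∑ n ∈ simplex q N,
      (starRingEnd ℂ) (α i n) * α j (fun k => n k - e k + f k) * ((klCoeff n e f : ℝ) : ℂ) = 0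

/-- Condition (C4): Knill–Laflamme non-deformation condition. -/
def condC4 (q K N t : ℕ) (α : Fin K → (Fin q → ℕ) → ℂ) : Prop :=
  ∀ i j : Fin K, i ≠ j → ∀ e ∈ simplex q t, ∀ f ∈ simplex q t,
    ∑ n ∈ simplex q N,
      ((starRingEnd ℂ) (α i n) * α i (fun k => n k - e k + f k) -
        (starRingEnd ℂ) (α j n) * α j (fun k => n k - e k + f k)) * ((klCoeff n e f : ℝ) : ℂ) = 0

/-- The `i`-th basis state of the PI code with coefficients `α`. -/
noncomputable def piCode {q K : ℕ} (N : ℕ) (α : Fin K → (Fin q → ℕ) → ℂ) (i : Fin K) :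
    Hsp q N :=
  ∑ n ∈ simplex q N, α i n • dicke n

-- AUX
lemma compn_apply {q N : ℕ} (x : Fin N → Fin q) (i : Fin q) :
    compn x i = ∑ k : Fin N, if x k = i then 1 else 0 := by
  rw [compn, Finset.card_filter]

lemma compn_cons {q M : ℕ} (a : Fin q) (y : Fin M → Fin q) (i : Fin q) :
    compn (Fin.cons a y) i = (if a = i then 1 else 0) + compn y i := by
  rw [compn_apply, Fin.sum_univ_succ, compn_apply]
  simp

lemma sum_compn {q N : ℕ} (x : Fin N → Fin q) : ∑ i, compn x i = N := by
  simp only [compn_apply]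
  rw [Finset.sum_comm]
  simp

def wcons {q : ℕ} : {t : ℕ} → (Fin t → Fin q) → {M : ℕ} → (Fin M → Fin q) → Fin (M + t) → Fin q
  | 0, _, _, y => y
  | _ + 1, w, _, y => Fin.cons (w 0) (wcons (fun k => w k.succ) y)

lemma Edel_apply {q : ℕ} : ∀ {t : ℕ} (w : Fin t → Fin q) {M : ℕ} (v : Hsp q (M + t))
    (y : Fin M → Fin q), Edel w v y = v (wcons w y)
  | 0, _, _, _, _ => rfl
  | t + 1, w, M, v, y => by
    show Edel (fun k => w k.succ) (delAt (w 0) 0 v) y = _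
    rw [Edel_apply]
    show v (Fin.insertNth 0 (w 0) _) = _
    rw [Fin.insertNth_zero']
    rfl

lemma compn_wcons {q : ℕ} : ∀ {t : ℕ} (w : Fin t → Fin q) {M : ℕ} (y : Fin M → Fin q)
    (i : Fin q), compn (wcons w y) i = compn w i + compn y i
  | 0, w, M, y, i => by
    show compn y i = compn w i + compn y i
    have : compn w i = 0 := by simp [compn_apply]
    omega
  | t + 1, w, M, y, i => by
    show compn (Fin.cons (w 0) (wcons (fun k => w k.succ) y)) i = _
    rw [compn_cons, compn_wcons]
    rw [compn_apply w, Fin.sum_univ_succ, ← compn_apply]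
    split <;> omega

open scoped Nat in
lemma multinat_step {q : ℕ} (n : Fin q → ℕ) (i : Fin q) (hi : 0 < n i) :
    (∑ j, n j) * multinat (fun j => n j - if i = j then 1 else 0) = n i * multinat n := by
  classical
  set m : Fin q → ℕ := fun j => n j - if i = j then 1 else 0 with hm
  have hmi : m i = n i - 1 := by simp [hm]
  have hmj : ∀ j, j ≠ i → m j = n j := by intro j hj; simp [hm, (Ne.symm hj : i ≠ j)]
  have hsum : ∑ j, m j + 1 = ∑ j, n j := by
    have h1 : ∑ j, (m j + if i = j then 1 else 0) = ∑ j, n j := by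
      apply Finset.sum_congr rfl
      intro j _
      by_cases hj : j = i
      · subst hj; simp [hmi]; omega
      · simp [hmj j hj, (Ne.symm hj : i ≠ j)]
    rw [← h1, Finset.sum_add_distrib, Finset.sum_ite_eq]
    simp
  have hP : n i * ∏ j, (m j)! = ∏ j, (n j)! := by
    rw [← Finset.mul_prod_erase Finset.univ _ (Finset.mem_univ i),
        ← Finset.mul_prod_erase Finset.univ (fun j => (n j)!) (Finset.mem_univ i),
        ← mul_assoc, hmi, Nat.mul_factorial_pred hi.ne']
    congr 1
    apply Finset.prod_congr rfl
    intro j hj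
    rw [hmj j (Finset.ne_of_mem_erase hj)]
  have hPpos : 0 < ∏ j, (m j)! := Finset.prod_pos fun j _ => Nat.factorial_pos _
  apply Nat.eq_of_mul_eq_mul_left hPpos
  calc (∏ j, (m j)!) * ((∑ j, n j) * multinat m)
      = (∑ j, n j) * ((∏ j, (m j)!) * Nat.multinomial Finset.univ m) := by
        rw [multinat]; ring
    _ = (∑ j, n j) * (∑ j, m j)! := by rw [Nat.multinomial_spec]
    _ = (∑ j, n j)! := by rw [← hsum, Nat.factorial_succ]
    _ = (∏ j, (n j)!) * Nat.multinomial Finset.univ n := by rw [Nat.multinomial_spec]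
    _ = (∏ j, (m j)!) * (n i * multinat n) := by rw [multinat, ← hP]; ring

lemma multinat_recur {q M : ℕ} (n : Fin q → ℕ) (h : ∑ i, n i = M + 1) :
    ∑ i, (if 0 < n i then multinat (fun j => n j - if i = j then 1 else 0) else 0)
      = multinat n := by
  apply Nat.eq_of_mul_eq_mul_left (show 0 < M + 1 by omega)
  rw [Finset.mul_sum]
  have key : ∀ i : Fin q,
      (M + 1) * (if 0 < n i then multinat (fun j => n j - if i = j then 1 else 0) else 0)
        = n i * multinat n := by
    intro i
    by_cases hi : 0 < n i
    · rw [if_pos hi, ← h, multinat_step n i hi]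
    · rw [if_neg hi, Nat.eq_zero_of_not_pos hi]
      simp
  rw [Finset.sum_congr rfl (fun i _ => key i), ← Finset.sum_mul, h]

def consE (q M : ℕ) : Fin q × (Fin M → Fin q) ≃ (Fin (M + 1) → Fin q) where
  toFun p := Fin.cons p.1 p.2
  invFun y := (y 0, Fin.tail y)
  left_inv p := by simp [Fin.tail_cons]
  right_inv y := Fin.cons_self_tail y

lemma card_compn {q : ℕ} : ∀ (M : ℕ) (n : Fin q → ℕ), (∑ i, n i) = M →
    (Finset.univ.filter (fun y : Fin M → Fin q => compn y = n)).card = multinat n := by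
  intro M
  induction M with
  | zero =>
    intro n hn
    have hn0 : n = fun _ => 0 := by
      funext i
      have := (Finset.sum_eq_zero_iff.mp hn) i (Finset.mem_univ i)
      exact this
    have hall : ∀ y : Fin 0 → Fin q, compn y = n := by
      intro y; funext i; rw [hn0, compn_apply]; simp
    rw [Finset.filter_true_of_mem (fun y _ => hall y)]
    rw [Finset.card_univ]
    rw [hn0]
    simp [multinat, Nat.multinomial]
  | succ M ih =>
    intro n hn
    classical
    rw [Finset.card_filter]
    rw [← Fintype.sum_equiv (consE q M) (fun p => if compn (consE q M p) = n then 1 else 0)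
        (fun y => if compn y = n then 1 else 0) (fun p => rfl)]
    rw [Fintype.sum_prod_type]
    have hEp : ∀ (i : Fin q) (z : Fin M → Fin q), consE q M (i, z) = Fin.cons i z := fun _ _ => rfl
    have hiff : ∀ (i : Fin q) (z : Fin M → Fin q),
        (compn (Fin.cons i z) = n) ↔
          (0 < n i ∧ compn z = fun j => n j - if i = j then 1 else 0) := by
      intro i z
      constructor
      · intro hc
        have hp : ∀ j, (if i = j then 1 else 0) + compn z j = n j := by
          intro j
          have := congrFun hc j
          rw [compn_cons] at this
          exact this
        constructor
        · have := hp i; simp at this; omega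
        · funext j
          have := hp j
          split at this <;> split <;> omega
      · rintro ⟨hpos, hz⟩
        funext j
        rw [compn_cons]
        have := congrFun hz j
        rw [this]
        by_cases hij : i = j
        · subst hij; simp; omega
        · simp [hij]
    have hinner : ∀ i : Fin q,
        (∑ z : Fin M → Fin q, if compn (consE q M (i, z)) = n then 1 else 0)
          = (if 0 < n i then multinat (fun j => n j - if i = j then 1 else 0) else 0) := by
      intro i
      by_cases hpos : 0 < n i
      · rw [if_pos hpos]
        have : ∀ z : Fin M → Fin q,
            (if compn (consE q M (i, z)) = n then (1:ℕ) else 0)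
              = (if compn z = (fun j => n j - if i = j then 1 else 0) then 1 else 0) := by
          intro z
          rw [hEp]
          apply if_congr _ rfl rfl
          rw [hiff]
          constructor
          · exact fun h => h.2
          · exact fun h => ⟨hpos, h⟩
        rw [Finset.sum_congr rfl (fun z _ => this z), ← Finset.card_filter]
        apply ih
        have h1 : ∑ j, ((n j - if i = j then 1 else 0) + if i = j then 1 else 0) = ∑ j, n j := by
          apply Finset.sum_congr rfl
          intro j _
          by_cases hj : i = j
          · subst hj; simp; omega
          · simp [hj]
        rw [Finset.sum_add_distrib, Finset.sum_ite_eq] at h1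
        simp at h1
        omega
      · rw [if_neg hpos]
        apply Finset.sum_eq_zero
        intro z _
        rw [if_neg]
        intro hc
        exact hpos ((hiff i z).mp hc).1
    rw [Finset.sum_congr rfl (fun i _ => hinner i)]
    exact multinat_recur n hn

lemma exists_word {q : ℕ} : ∀ {t : ℕ} (e : Fin q → ℕ), (∑ i, e i) = t →
    ∃ w : Fin t → Fin q, compn w = e := by
  intro t
  induction t with
  | zero =>
    intro e he
    refine ⟨Fin.elim0, ?_⟩
    funext i
    have := (Finset.sum_eq_zero_iff.mp he) i (Finset.mem_univ i)
    rw [compn_apply]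
    simp [this]
  | succ t ih =>
    intro e he
    have hex : ∃ i, 0 < e i := by
      by_contra hc
      push_neg at hc
      have : ∑ i, e i = 0 := Finset.sum_eq_zero (fun i _ => by have := hc i; omega)
      omega
    obtain ⟨i, hi⟩ := hex
    have hsum : ∑ j, (e j - if i = j then 1 else 0) = t := by
      have h1 : ∑ j, ((e j - if i = j then 1 else 0) + if i = j then 1 else 0) = ∑ j, e j := by
        apply Finset.sum_congr rfl
        intro j _
        by_cases hj : i = j
        · subst hj; simp; omega
        · simp [hj]
      rw [Finset.sum_add_distrib, Finset.sum_ite_eq] at h1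
      simp at h1
      omega
    obtain ⟨w', hw'⟩ := ih _ hsum
    refine ⟨Fin.cons i w', ?_⟩
    funext j
    rw [compn_cons, hw']
    by_cases hj : i = j
    · subst hj; simp; omega
    · simp [hj]

lemma klCoeff_of_not_le {q : ℕ} {n e : Fin q → ℕ} (f : Fin q → ℕ) (h : ¬ ∀ k, e k ≤ n k) :
    klCoeff n e f = 0 := by
  unfold klCoeff multZ
  rw [if_neg, Nat.cast_zero, zero_div]
  push_neg at h ⊢
  obtain ⟨k, hk⟩ := h
  exact ⟨k, by omega⟩

lemma klCoeff_of_le {q : ℕ} {n e : Fin q → ℕ} (f : Fin q → ℕ) (h : ∀ k, e k ≤ n k) :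
    klCoeff n e f = (multinat (fun k => n k - e k) : ℝ) *
      ((Real.sqrt (multinat n))⁻¹ * (Real.sqrt (multinat (fun k => n k - e k + f k)))⁻¹) := by
  unfold klCoeff multZ
  rw [if_pos (fun i => by show (0:ℤ) ≤ (n i : ℤ) - (e i : ℤ); have := h i; omega)]
  have h2 : (fun i => ((n i : ℤ) - (e i : ℤ)).toNat) = fun k => n k - e k := by
    funext i; omega
  rw [h2, Real.sqrt_mul (by positivity), div_eq_mul_inv, mul_inv]
  rfl

lemma sum_dicke_pair {q M t : ℕ} (we wf : Fin t → Fin q) (n m : Fin q → ℕ)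
    (hn : ∑ i, n i = M + t) :
    ∑ y : Fin M → Fin q, (starRingEnd ℂ) (dicke n (wcons we y)) * dicke m (wcons wf y) =
      if m = (fun k => n k - compn we k + compn wf k)
      then ((klCoeff n (compn we) (compn wf) : ℝ) : ℂ) else 0 := by
  classical
  have hse : ∑ i, compn we i = t := sum_compn we
  simp only [dicke, apply_ite (starRingEnd ℂ), Complex.conj_ofReal, map_zero,
    ite_mul, zero_mul, mul_ite, mul_zero]
  have hmerge : ∀ y : Fin M → Fin q,
      (if compn (wcons wf y) = m then
        (if compn (wcons we y) = n then
          ((((Real.sqrt (multinat n))⁻¹ : ℝ) : ℂ) * (((Real.sqrt (multinat m))⁻¹ : ℝ) : ℂ))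
         else 0) else 0)
      = (if (compn (wcons we y) = n ∧ compn (wcons wf y) = m) then
          ((((Real.sqrt (multinat n))⁻¹ : ℝ) : ℂ) * (((Real.sqrt (multinat m))⁻¹ : ℝ) : ℂ))
         else 0) := by
    intro y
    by_cases h1 : compn (wcons we y) = n <;> by_cases h2 : compn (wcons wf y) = m <;>
      simp [h1, h2]
  rw [Finset.sum_congr rfl (fun y _ => hmerge y)]
  by_cases hle : ∀ k, compn we k ≤ n k
  · by_cases hm : m = fun k => n k - compn we k + compn wf k
    · rw [if_pos hm]
      have hcond : ∀ y : Fin M → Fin q,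
          (compn (wcons we y) = n ∧ compn (wcons wf y) = m)
            ↔ compn y = fun k => n k - compn we k := by
        intro y
        constructor
        · rintro ⟨h1, _⟩
          funext k
          have h := congrFun h1 k
          rw [compn_wcons] at h
          show compn y k = n k - compn we k
          omega
        · intro hy
          have hyk : ∀ k, compn y k = n k - compn we k := fun k => congrFun hy k
          constructor
          · funext k
            rw [compn_wcons, hyk k]
            have := hle k
            omega
          · funext k
            rw [compn_wcons, hyk k, hm]
            show compn wf k + (n k - compn we k) = n k - compn we k + compn wf k
            omega
      rw [Finset.sum_congr rfl (fun y _ => if_congr (hcond y) rfl rfl)]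
      rw [← Finset.sum_filter, Finset.sum_const, nsmul_eq_mul]
      have hsub : ∑ k, (n k - compn we k) = M := by
        have h1 : ∑ k, ((n k - compn we k) + compn we k) = ∑ k, n k := by
          apply Finset.sum_congr rfl
          intro k _
          have := hle k
          omega
        rw [Finset.sum_add_distrib] at h1
        omega
      rw [card_compn M _ hsub]
      rw [klCoeff_of_le (compn wf) hle, hm]
      push_cast
      ring
    · rw [if_neg hm]
      apply Finset.sum_eq_zero
      intro y _
      rw [if_neg]
      rintro ⟨h1, h2⟩
      apply hm
      funext k
      have e1 := congrFun h1 k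
      have e2 := congrFun h2 k
      rw [compn_wcons] at e1 e2
      show m k = n k - compn we k + compn wf k
      have := hle k
      omega
  · rw [klCoeff_of_not_le (compn wf) hle]
    simp only [Complex.ofReal_zero, ite_self]
    apply Finset.sum_eq_zero
    intro y _
    rw [if_neg]
    rintro ⟨h1, _⟩
    apply hle
    intro k
    have h := congrFun h1 k
    rw [compn_wcons] at h
    omega

lemma key {q M t : ℕ} (we wf : Fin t → Fin q) (β γ : (Fin q → ℕ) → ℂ) :
    hinner (Edel (M := M) we (∑ n ∈ simplex q (M + t), β n • dicke n))
           (Edel (M := M) wf (∑ n ∈ simplex q (M + t), γ n • dicke n)) =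
    ∑ n ∈ simplex q (M + t),
      (starRingEnd ℂ) (β n) * γ (fun k => n k - compn we k + compn wf k) *
        ((klCoeff n (compn we) (compn wf) : ℝ) : ℂ) := by
  classical
  unfold hinner
  have step1 : ∀ y : Fin M → Fin q,
      (starRingEnd ℂ) (Edel (M := M) we (∑ n ∈ simplex q (M + t), β n • dicke n) y) *
        (Edel (M := M) wf (∑ n ∈ simplex q (M + t), γ n • dicke n) y)
      = ∑ n ∈ simplex q (M + t), ∑ m ∈ simplex q (M + t),
          ((starRingEnd ℂ) (β n) * γ m) *
            ((starRingEnd ℂ) (dicke n (wcons we y)) * dicke m (wcons wf y)) := by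
    intro y
    rw [Edel_apply, Edel_apply, Finset.sum_apply, Finset.sum_apply, map_sum,
      Finset.sum_mul_sum]
    apply Finset.sum_congr rfl; intro n _
    apply Finset.sum_congr rfl; intro m _
    simp only [Pi.smul_apply, smul_eq_mul, map_mul]
    ring
  rw [Finset.sum_congr rfl (fun y _ => step1 y)]
  rw [Finset.sum_comm]
  apply Finset.sum_congr rfl
  intro n hn
  have hns : ∑ i, n i = M + t := Finset.Nat.mem_antidiagonalTuple.mp hn
  rw [Finset.sum_comm]
  have step2 : ∀ m ∈ simplex q (M + t),
      ∑ y : Fin M → Fin q, ((starRingEnd ℂ) (β n) * γ m) *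
          ((starRingEnd ℂ) (dicke n (wcons we y)) * dicke m (wcons wf y))
      = if m = (fun k => n k - compn we k + compn wf k)
        then ((starRingEnd ℂ) (β n) * γ m) * ((klCoeff n (compn we) (compn wf) : ℝ) : ℂ)
        else 0 := by
    intro m _
    rw [← Finset.mul_sum, sum_dicke_pair we wf n m hns]
    by_cases h : m = (fun k => n k - compn we k + compn wf k) <;> simp [h]
  rw [Finset.sum_congr rfl step2, Finset.sum_ite_eq' (simplex q (M + t))]
  by_cases hle : ∀ k, compn we k ≤ n k
  · have hmem : (fun k => n k - compn we k + compn wf k) ∈ simplex q (M + t) := by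
      apply Finset.Nat.mem_antidiagonalTuple.mpr
      have hse := sum_compn we
      have hsf := sum_compn wf
      have h1 : ∑ k, ((n k - compn we k) + compn we k) = ∑ k, n k :=
        Finset.sum_congr rfl (fun k _ => by have := hle k; omega)
      rw [Finset.sum_add_distrib] at h1
      rw [show (fun k => n k - compn we k + compn wf k) = fun k => (n k - compn we k) + compn wf k from rfl]
      rw [Finset.sum_add_distrib]
      omega
    rw [if_pos hmem]
  · rw [klCoeff_of_not_le (compn wf) hle]
    simp

/-- for nonzero coefficient vectors `α^{(0)},…,α^{(K−1)}` satisfying (C1) and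
(C2), with code basis states `c_i = ∑_{n ∈ S_{q,N}} α^{(i)}_n D_n` and `N = M + t ≥ t`, the
Knill–Laflamme orthogonality and non-deformation conditions for the `t`-deletion Kraus set
(all composite deletions `E_e`, `e ∈ S_{q,t}`, realized here by all words `w : Fin t → Fin q`
of deletion types) hold if and only if conditions (C3) and (C4) hold; i.e., the PI code with
basis `(c_i)` has distance `t + 1` iff (C1)–(C4) hold. -/
theorem pi_code_error_correction_iff (q K M t : ℕ) (hq : 2 ≤ q) (hK : 2 ≤ K)
    (α : Fin K → (Fin q → ℕ) → ℂ)
    (hnonzero : ∀ i : Fin K, ∃ n ∈ simplex q (M + t), α i n ≠ 0)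
    (hC1 : condC1 q K (M + t) α) (hC2 : condC2 q K (M + t) α) :
    ((∀ (we wf : Fin t → Fin q) (i j : Fin K), i ≠ j →
        hinner (Edel we (piCode (M + t) α i)) (Edel wf (piCode (M + t) α j)) = 0) ∧
     (∀ (we wf : Fin t → Fin q) (i j : Fin K),
        hinner (Edel we (piCode (M + t) α i)) (Edel wf (piCode (M + t) α i)) =
          hinner (Edel we (piCode (M + t) α j)) (Edel wf (piCode (M + t) α j))))
    ↔ (condC3 q K (M + t) t α ∧ condC4 q K (M + t) t α) := by
  classical
  have hpc : ∀ i : Fin K, piCode (M + t) α i = ∑ n ∈ simplex q (M + t), α i n • dicke n :=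
    fun i => rfl
  constructor
  · rintro ⟨hA1, hA2⟩
    constructor
    · intro i j hij e he f hf
      obtain ⟨we, hwe⟩ := exists_word e (Finset.Nat.mem_antidiagonalTuple.mp he)
      obtain ⟨wf, hwf⟩ := exists_word f (Finset.Nat.mem_antidiagonalTuple.mp hf)
      have h := hA1 we wf i j hij
      simp only [hpc] at h
      rw [key, hwe, hwf] at h
      exact h
    · intro i j hij e he f hf
      obtain ⟨we, hwe⟩ := exists_word e (Finset.Nat.mem_antidiagonalTuple.mp he)
      obtain ⟨wf, hwf⟩ := exists_word f (Finset.Nat.mem_antidiagonalTuple.mp hf)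
      have h := hA2 we wf i j
      simp only [hpc] at h
      rw [key, key, hwe, hwf] at h
      simp only [sub_mul]
      rw [Finset.sum_sub_distrib, h, sub_self]
  · rintro ⟨h3, h4⟩
    constructor
    · intro we wf i j hij
      have hme : compn we ∈ simplex q t :=
        Finset.Nat.mem_antidiagonalTuple.mpr (sum_compn we)
      have hmf : compn wf ∈ simplex q t :=
        Finset.Nat.mem_antidiagonalTuple.mpr (sum_compn wf)
      simp only [hpc]
      rw [key]
      exact h3 i j hij _ hme _ hmf
    · intro we wf i j
      by_cases hij : i = j
      · subst hij; rfl
      · have hme : compn we ∈ simplex q t :=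
          Finset.Nat.mem_antidiagonalTuple.mpr (sum_compn we)
        have hmf : compn wf ∈ simplex q t :=
          Finset.Nat.mem_antidiagonalTuple.mpr (sum_compn wf)
        simp only [hpc]
        rw [key, key]
        have h := h4 i j hij _ hme _ hmf
        simp only [sub_mul] at h
        rw [Finset.sum_sub_distrib] at h
        exact sub_eq_zero.mp h
end

section
/- Let G be a finite additive abelian group containing a t-Sidon family g_0,…,g_{q−1} of q elements, and let q ≥ 2 and N > t ≥ 1 be integers. Then there exists a set B ⊆ S_{q,N} such that d₁(x,y) ≥ t+1 for all distinct x, y ∈ B, and |B| · |G| ≥ |S_{q,N}| = C(N+q−1, q−1). -/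
/-- The ℓ₁ distance `d₁(x,y) = (1/2) ∑ i, |x i − y i|` on the discrete simplex (the sum of
absolute differences is even for tuples with equal sums, so division by 2 is exact). -/
def d1 {q : ℕ} (x y : Fin q → ℕ) : ℕ := (∑ i, ((x i : ℤ) - (y i : ℤ)).natAbs) / 2

/-- A family `g : Fin q → G` in an additive abelian group is a `t`-Sidon family if all
`t`-fold sums (with repetition) of its members are distinct: whenever two multiplicity
tuples `e, f` of total weight `t` give equal sums `∑ i, e i • g i = ∑ i, f i • g i`,
we have `e = f`. -/
def IsSidonFamily {G : Type*} [AddCommGroup G] {q : ℕ} (t : ℕ) (g : Fin q → G) : Prop :=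
  ∀ e f : Fin q → ℕ, ∑ i, e i = t → ∑ i, f i = t →
    ∑ i, e i • g i = ∑ i, f i • g i → e = f

/-!
Send a tuple `x` of the simplex to `∑ i, x i • g i ∈ G`; some fibre of this map carries at least
`|S_{q,N}| / |G|` points, and it is a code of minimum distance `t + 1`. Indeed, if `x ≠ y` lie in
one fibre, the tuples `x - y` and `y - x` (truncated subtraction) have the same weight
`d₁(x, y)` and the same sum in `G`; padding both by the same amount up to weight `t`, the
`t`-Sidon property forces them to coincide, hence `x = y`, unless `d₁(x, y) > t`.
-/

open Finset

lemma card_simplex {q : ℕ} (hq : q ≠ 0) (N : ℕ) :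
    #(simplex q N) = (N + q - 1).choose (q - 1) := by
  rw [simplex, ← piAntidiag_univ_fin_eq_antidiagonalTuple, ← map_sym_eq_piAntidiag, card_map,
    sym_univ, card_univ, Sym.card_sym_eq_choose, Fintype.card_fin, add_comm q,
    ← Nat.choose_symm_of_eq_add]
  omega

lemma Finset.exists_card_le_card_fiber_mul_card {α β : Type*} [DecidableEq β] [Fintype β]
    [Nonempty β] (s : Finset α) (f : α → β) :
    ∃ b, #s ≤ #{x ∈ s | f x = b} * Fintype.card β := by
  obtain ⟨b, -, hb⟩ := univ.exists_max_image (fun b ↦ #{x ∈ s | f x = b}) univ_nonempty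
  refine ⟨b, ?_⟩
  calc #s = ∑ b', #{x ∈ s | f x = b'} := card_eq_sum_card_fiberwise fun x _ ↦ mem_univ (f x)
    _ ≤ ∑ _b', #{x ∈ s | f x = b} := sum_le_sum fun b' _ ↦ hb b' (mem_univ b')
    _ = #{x ∈ s | f x = b} * Fintype.card β := by rw [sum_const, card_univ, smul_eq_mul, mul_comm]

section Simplex

variable {q : ℕ} {x y : Fin q → ℕ}

lemma add_tsub_eq_add_tsub (x y : Fin q → ℕ) : x + (y - x) = y + (x - y) := by
  funext i
  simp only [Pi.add_apply, Pi.sub_apply]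
  omega

lemma sum_tsub_eq_sum_tsub (h : ∑ i, x i = ∑ i, y i) : ∑ i, (x - y) i = ∑ i, (y - x) i := by
  have := congrArg (fun z : Fin q → ℕ ↦ ∑ i, z i) (add_tsub_eq_add_tsub x y)
  simpa only [Pi.add_apply, sum_add_distrib, h, add_right_inj] using this.symm

lemma d1_eq_sum_tsub (h : ∑ i, x i = ∑ i, y i) : d1 x y = ∑ i, (x - y) i := by
  have habs : ∀ i, ((x i : ℤ) - y i).natAbs = (x - y) i + (y - x) i := fun i ↦ by
    simp only [Pi.sub_apply]
    omega
  rw [d1, sum_congr rfl fun i _ ↦ habs i, sum_add_distrib, ← sum_tsub_eq_sum_tsub h]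
  omega

end Simplex

section Sidon

variable {G : Type*} [AddCommGroup G] {q : ℕ} {g : Fin q → G}

lemma IsSidonFamily.of_le {s t : ℕ} (hg : IsSidonFamily t g) (hst : s ≤ t) :
    IsSidonFamily s g := by
  intro e f he hf hef
  rcases q.eq_zero_or_pos with rfl | hq
  · exact Subsingleton.elim e f
  set pad : Fin q → ℕ := Pi.single ⟨0, hq⟩ (t - s)
  have hpad : ∑ i, pad i = t - s := by simp [pad]
  have h := hg (e + pad) (f + pad)
    (by simp only [Pi.add_apply, sum_add_distrib, he, hpad]; omega)
    (by simp only [Pi.add_apply, sum_add_distrib, hf, hpad]; omega)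
    (by simp only [Pi.add_apply, add_smul, sum_add_distrib, hef])
  exact add_right_cancel h

lemma IsSidonFamily.eq_of_d1_le {t : ℕ} (hg : IsSidonFamily t g) {x y : Fin q → ℕ}
    (hsum : ∑ i, x i = ∑ i, y i) (hgsum : ∑ i, x i • g i = ∑ i, y i • g i)
    (hd : d1 x y ≤ t) : x = y := by
  have hdiff : ∑ i, (x - y) i • g i = ∑ i, (y - x) i • g i := by
    have := congrArg (fun z : Fin q → ℕ ↦ ∑ i, z i • g i) (add_tsub_eq_add_tsub x y)
    simpa only [Pi.add_apply, add_smul, sum_add_distrib, hgsum, add_right_inj] using this.symm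
  have hd' : ∑ i, (x - y) i ≤ t := d1_eq_sum_tsub hsum ▸ hd
  have hxy : x - y = y - x := hg.of_le hd' _ _ rfl (sum_tsub_eq_sum_tsub hsum).symm hdiff
  have := add_tsub_eq_add_tsub x y
  rw [hxy] at this
  exact add_right_cancel this

end Sidon

theorem sidon_gives_large_l1_code_general {G : Type*} [AddCommGroup G] [Fintype G]
    (q N t : ℕ) (hq : 2 ≤ q)
    (g : Fin q → G) (hSidon : IsSidonFamily t g) :
    ∃ B : Finset (Fin q → ℕ),
      (∀ x ∈ B, ∑ i, x i = N) ∧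
      (∀ x ∈ B, ∀ y ∈ B, x ≠ y → t + 1 ≤ d1 x y) ∧
      Nat.choose (N + q - 1) (q - 1) ≤ B.card * Fintype.card G := by
  classical
  have mem_simplex {x : Fin q → ℕ} : x ∈ simplex q N ↔ ∑ i, x i = N :=
    Nat.mem_antidiagonalTuple
  obtain ⟨b, hb⟩ := (simplex q N).exists_card_le_card_fiber_mul_card fun x ↦ ∑ i, x i • g i
  refine ⟨{x ∈ simplex q N | ∑ i, x i • g i = b}, fun x hx ↦ ?_, fun x hx y hy hxy ↦ ?_, ?_⟩
  · exact mem_simplex.1 (mem_filter.1 hx).1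
  · rw [mem_filter, mem_simplex] at hx hy
    by_contra! hd
    exact hxy (hSidon.eq_of_d1_le (hx.1.trans hy.1.symm) (hx.2.trans hy.2.symm) (by omega))
  · rwa [← card_simplex (by omega)]

/-- if a finite additive abelian group `G` contains a `t`-Sidon family of `q`
elements, and `q ≥ 2`, `N > t ≥ 1`, then there exists an ℓ₁ code `B ⊆ S_{q,N}` with minimum
distance `≥ t + 1` and `|B| · |G| ≥ |S_{q,N}| = C(N+q−1, q−1)`. -/
theorem sidon_gives_large_l1_code {G : Type*} [AddCommGroup G] [Fintype G]
    (q N t : ℕ) (hq : 2 ≤ q) (ht : 1 ≤ t) (htN : t < N)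
    (g : Fin q → G) (hSidon : IsSidonFamily t g) :
    ∃ B : Finset (Fin q → ℕ),
      (∀ x ∈ B, ∑ i, x i = N) ∧
      (∀ x ∈ B, ∀ y ∈ B, x ≠ y → t + 1 ≤ d1 x y) ∧
      Nat.choose (N + q - 1) (q - 1) ≤ B.card * Fintype.card G :=
  sidon_gives_large_l1_code_general q N t hq g hSidon
end
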